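/- Lyapunov stability criterion (sufficiency): if there exist symmetric positive definite matrices P and L with P = Aᵀ P A + L, then A is Schur stable, i.e. ρ(A) < 1. -/

import Mathlib

open Matrix

/-- Spectral radius of a real square matrix, computed over the complex eigenvalues. -/
noncomputable def specRad {n : ℕ} (A : Matrix (Fin n) (Fin n) ℝ) : ENNReal :=
  spectralRadius ℂ (A.map (algebraMap ℝ ℂ))

private lemma re_dot {n : ℕ} (M : Matrix (Fin n) (Fin n) ℝ) (v : Fin n → ℂ) :
    (star v ⬝ᵥ (M.map (algebraMap ℝ ℂ)) *ᵥ v).re =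
      (fun i => (v i).re) ⬝ᵥ (M *ᵥ fun i => (v i).re) +
      (fun i => (v i).im) ⬝ᵥ (M *ᵥ fun i => (v i).im) := by
  simp only [dotProduct, mulVec, Pi.star_apply, map_apply, Finset.mul_sum,
    Complex.re_sum, Complex.mul_re, Complex.mul_im, Complex.star_def, Complex.conj_re,
    Complex.conj_im, Complex.ofReal_re, Complex.ofReal_im, RingHom.coe_coe,
    Complex.coe_algebraMap]
  rw [← Finset.sum_add_distrib]
  refine Finset.sum_congr rfl fun i _ => ?_
  rw [← Finset.sum_add_distrib]
  exact Finset.sum_congr rfl fun j _ => by ring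

private lemma pos_re_dot {n : ℕ} {M : Matrix (Fin n) (Fin n) ℝ} (hM : M.PosDef)
    (v : Fin n → ℂ) (hv : v ≠ 0) :
    0 < (star v ⬝ᵥ (M.map (algebraMap ℝ ℂ)) *ᵥ v).re := by
  rw [re_dot]
  set a : Fin n → ℝ := fun i => (v i).re with ha
  set b : Fin n → ℝ := fun i => (v i).im with hb
  have hab : a ≠ 0 ∨ b ≠ 0 := by
    by_contra h
    push_neg at h
    apply hv
    funext i
    have h1 := congrFun h.1 i
    have h2 := congrFun h.2 i
    simp only [ha, hb, Pi.zero_apply] at h1 h2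
    exact Complex.ext h1 h2
  have hsa : ∀ x : Fin n → ℝ, star x = x := fun x => funext fun i => star_trivial _
  rcases hab with h | h
  · exact add_pos_of_pos_of_nonneg (by simpa [hsa] using hM.dotProduct_mulVec_pos h)
      (by simpa [hsa] using hM.posSemidef.dotProduct_mulVec_nonneg b)
  · exact add_pos_of_nonneg_of_pos (by simpa [hsa] using hM.posSemidef.dotProduct_mulVec_nonneg a)
      (by simpa [hsa] using hM.dotProduct_mulVec_pos h)

private lemma map_mulVec_star {n : ℕ} (A : Matrix (Fin n) (Fin n) ℝ) (v : Fin n → ℂ) :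
    (A.map (algebraMap ℝ ℂ)) *ᵥ star v = star ((A.map (algebraMap ℝ ℂ)) *ᵥ v) := by
  funext i
  simp [mulVec, dotProduct, map_sum, _root_.map_mul, Complex.conj_ofReal]

/-- Lyapunov stability criterion (sufficiency): if P ≻ 0 and L ≻ 0 satisfy
P = Aᵀ P A + L, then ρ(A) < 1. -/
theorem lyapunov_stability_criterion {n : ℕ} (A P L : Matrix (Fin n) (Fin n) ℝ)
    (hP : P.PosDef) (hL : L.PosDef)
    (hEq : P = Aᵀ * P * A + L) :
    specRad A < 1 := by
  have key : ∀ μ ∈ spectrum ℂ (A.map (algebraMap ℝ ℂ)), ‖μ‖₊ < 1 := by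
    intro μ hμ
    rw [← AlgEquiv.spectrum_eq (Matrix.toLinAlgEquiv' (R := ℂ) (n := Fin n)),
        ← Module.End.hasEigenvalue_iff_mem_spectrum] at hμ
    obtain ⟨v, hv⟩ := hμ.exists_hasEigenvector
    have hv0 : v ≠ 0 := hv.right
    have hAv : (A.map (algebraMap ℝ ℂ)) *ᵥ v = μ • v := by
      have := hv.apply_eq_smul
      rwa [Matrix.toLinAlgEquiv'_apply] at this
    have hEqC : P.map (algebraMap ℝ ℂ) =
        (A.map (algebraMap ℝ ℂ))ᵀ * P.map (algebraMap ℝ ℂ) * A.map (algebraMap ℝ ℂ)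
          + L.map (algebraMap ℝ ℂ) := by
      conv_lhs => rw [hEq]
      rw [Matrix.map_add _ (fun a b => map_add (algebraMap ℝ ℂ) a b), Matrix.map_mul, Matrix.map_mul, Matrix.transpose_map]
    have h2 : star v ⬝ᵥ ((A.map (algebraMap ℝ ℂ))ᵀ * P.map (algebraMap ℝ ℂ)
          * A.map (algebraMap ℝ ℂ)) *ᵥ v
        = (starRingEnd ℂ) μ * (μ * (star v ⬝ᵥ (P.map (algebraMap ℝ ℂ)) *ᵥ v)) := by
      rw [← mulVec_mulVec, ← mulVec_mulVec, dotProduct_mulVec, vecMul_transpose,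
        map_mulVec_star, hAv]
      rw [star_smul, mulVec_smul, smul_dotProduct, dotProduct_smul]
      simp [smul_eq_mul]
    have hsplit : star v ⬝ᵥ (P.map (algebraMap ℝ ℂ)) *ᵥ v
        = (starRingEnd ℂ) μ * (μ * (star v ⬝ᵥ (P.map (algebraMap ℝ ℂ)) *ᵥ v))
          + star v ⬝ᵥ (L.map (algebraMap ℝ ℂ)) *ᵥ v := by
      conv_lhs => rw [hEqC]
      rw [add_mulVec, dotProduct_add, h2]
    have hp : 0 < (star v ⬝ᵥ (P.map (algebraMap ℝ ℂ)) *ᵥ v).re := pos_re_dot hP v hv0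
    have hl : 0 < (star v ⬝ᵥ (L.map (algebraMap ℝ ℂ)) *ᵥ v).re := pos_re_dot hL v hv0
    have hre : (star v ⬝ᵥ (P.map (algebraMap ℝ ℂ)) *ᵥ v).re
        = ‖μ‖ ^ 2 * (star v ⬝ᵥ (P.map (algebraMap ℝ ℂ)) *ᵥ v).re
          + (star v ⬝ᵥ (L.map (algebraMap ℝ ℂ)) *ᵥ v).re := by
      have := congrArg Complex.re hsplit
      rwa [Complex.add_re, ← mul_assoc, Complex.conj_mul', ← Complex.ofReal_pow,
        Complex.re_ofReal_mul] at this
    have hs : ‖μ‖ ^ 2 < 1 := by nlinarith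
    have habs : ‖μ‖ < 1 := by nlinarith [norm_nonneg μ]
    exact_mod_cast habs
  have hfin : (spectrum ℂ (A.map (algebraMap ℝ ℂ))).Finite :=
    Matrix.finite_spectrum (A.map (algebraMap ℝ ℂ))
  have hrad : specRad A = hfin.toFinset.sup (fun μ => (‖μ‖₊ : ENNReal)) := by
    rw [specRad, spectralRadius, Finset.sup_eq_iSup]
    simp only [Set.Finite.mem_toFinset]
  rw [hrad, Finset.sup_lt_iff (by norm_num : (⊥ : ENNReal) < 1)]
  intro μ hμ
  rw [Set.Finite.mem_toFinset] at hμ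
  exact_mod_cast key μ hμ
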